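/- Let μ(f) = H^{−1} ζ(𝒥f) and μ̃(f) = H̃^{−1} ζ̃(𝒥f), where H = ζ(g) > 0, H̃ = ζ̃(g) > 0 with g(x,v,x',v') = ‖x−x'‖₂/√d, and 𝒥 is the interpolation operator. Then for every bounded Lipschitz function f, |μ̃(f) − μ(f)| ≤ (d_W(ζ, ζ̃) / (√d · H̃)) · ( |f|_Lip · E_ζ[‖x' − x‖²]^{1/2} + ‖f‖_∞ + |μ(f)| ). -/

import Mathlib

/-!
Fix a coupling `ξ` of `ζ` and `ζ̃` and let `c` be the ground metric of `W2S`. Along the coupling,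
`g` moves by at most `c / √d`, and writing `𝒥f = g · (line average of f)` shows that `𝒥f` moves by
at most `(|f|_Lip g(u₁) + ‖f‖_∞ / √d) c`. By Cauchy–Schwarz the coupling integrals are at most
`√(∫ c² dξ)` times `1` and `√(ζ(g²)) = E_ζ[‖x' − x‖²]^{1/2} / √d` respectively, and the infimum over
couplings gives `|H − H̃| ≤ d_W / √d` and
`|ζ̃(𝒥f) − ζ(𝒥f)| ≤ d_W (|f|_Lip E_ζ[‖x' − x‖²]^{1/2} + ‖f‖_∞) / √d`.
The theorem then follows from `μ̃(f) − μ(f) = H̃⁻¹ [ζ̃(𝒥f) − ζ(𝒥f)] + H̃⁻¹ (H − H̃) μ(f)`.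
-/

open MeasureTheory

/-- The interpolation operator on `u = ((x, v), (x', v'))`:
`(𝒥 f)(u) = (‖x' − x‖₂/√d) ∫_0^1 f(x + t(x' − x), v) dt`. -/
noncomputable def Jop {d : ℕ}
    (f : EuclideanSpace ℝ (Fin d) → EuclideanSpace ℝ (Fin d) → ℝ)
    (u : (EuclideanSpace ℝ (Fin d) × EuclideanSpace ℝ (Fin d)) ×
         (EuclideanSpace ℝ (Fin d) × EuclideanSpace ℝ (Fin d))) : ℝ :=
  (‖u.2.1 - u.1.1‖ / Real.sqrt d) * ∫ t in (0:ℝ)..1, f (u.1.1 + t • (u.2.1 - u.1.1)) u.1.2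

/-- The 2-Wasserstein distance on `(ℝ^d × {−1,1}^d)²` for the ground norm
`‖u₁ − u₂‖ = ‖x₁−x₂‖₂ + ‖v₁−v₂‖₂ + ‖x₁'−x₂'‖₂ + ‖v₁'−v₂'‖₂`. -/
noncomputable def W2S {d : ℕ}
    (μ ν : Measure ((EuclideanSpace ℝ (Fin d) × EuclideanSpace ℝ (Fin d)) ×
      (EuclideanSpace ℝ (Fin d) × EuclideanSpace ℝ (Fin d)))) : ℝ :=
  Real.sqrt (sInf {r : ℝ | ∃ ξ, ξ.map Prod.fst = μ ∧ ξ.map Prod.snd = ν ∧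
    r = ∫ p, (‖p.1.1.1 - p.2.1.1‖ + ‖p.1.1.2 - p.2.1.2‖ +
              ‖p.1.2.1 - p.2.2.1‖ + ‖p.1.2.2 - p.2.2.2‖) ^ 2 ∂ξ})

theorem le_sqrt_csInf_mul {S : Set ℝ} (hne : S.Nonempty) (hbdd : BddBelow S) {D C : ℝ}
    (hC : 0 ≤ C) (h : ∀ r ∈ S, D ≤ √r * C) : D ≤ √(sInf S) * C := by
  have hmono : Monotone fun r => √r * C := fun a b hab =>
    mul_le_mul_of_nonneg_right (Real.sqrt_le_sqrt hab) hC
  rw [hmono.map_csInf_of_continuousAt (by fun_prop) hne hbdd]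
  exact le_csInf (hne.image _) (Set.forall_mem_image.2 h)

theorem abs_inv_mul_sub_inv_mul_le {H Ht A At : ℝ} (hH : H ≠ 0) (hHt : 0 < Ht) :
    |Ht⁻¹ * At - H⁻¹ * A| ≤ Ht⁻¹ * (|At - A| + |H - Ht| * |H⁻¹ * A|) := by
  have hsplit : Ht⁻¹ * At - H⁻¹ * A = Ht⁻¹ * ((At - A) + (H - Ht) * (H⁻¹ * A)) := by
    field_simp
    ring
  rw [hsplit, abs_mul, abs_of_pos (inv_pos.2 hHt), ← abs_mul]
  gcongr
  exact abs_add_le _ _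

theorem integral_mul_le_sqrt_integral_sq_mul {α : Type*} [MeasurableSpace α] {μ : Measure α}
    {F G : α → ℝ} (hF : MemLp F 2 μ) (hG : MemLp G 2 μ) :
    ∫ a, F a * G a ∂μ ≤ √(∫ a, F a ^ 2 ∂μ) * √(∫ a, G a ^ 2 ∂μ) := by
  have h2 : ENNReal.ofReal 2 = 2 := by norm_num
  have hHolder := integral_mul_norm_le_Lp_mul_Lq Real.HolderConjugate.two_two
    (h2 ▸ hF) (h2 ▸ hG)
  simp only [Real.rpow_two, Real.norm_eq_abs, sq_abs] at hHolder
  calc ∫ a, F a * G a ∂μ ≤ ‖∫ a, F a * G a ∂μ‖ := Real.le_norm_self _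
    _ ≤ ∫ a, |F a| * |G a| ∂μ := by
        simpa only [Real.norm_eq_abs, abs_mul] using
          norm_integral_le_integral_norm (fun a => F a * G a)
    _ ≤ _ := by simpa only [Real.sqrt_eq_rpow] using hHolder

theorem integral_le_sqrt_integral_sq {α : Type*} [MeasurableSpace α] {μ : Measure α}
    [IsProbabilityMeasure μ] {F : α → ℝ} (hF : MemLp F 2 μ) :
    ∫ a, F a ∂μ ≤ √(∫ a, F a ^ 2 ∂μ) := by
  simpa using integral_mul_le_sqrt_integral_sq_mul hF (memLp_const 1)

theorem MeasureTheory.MeasurePreserving.integral_comp_of_aestronglyMeasurable {X Y : Type*}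
    [MeasurableSpace X] [MeasurableSpace Y] {μ : Measure X} {ν : Measure Y} {φ : X → Y}
    (hφ : MeasurePreserving φ μ ν) {F : Y → ℝ} (hF : AEStronglyMeasurable F ν) : ∫ x, F (φ x) ∂μ = ∫ y, F y ∂ν := by
  rw [← hφ.map_eq] at hF ⊢
  exact (integral_map hφ.measurable.aemeasurable hF).symm

theorem MeasureTheory.MeasurePreserving.isProbabilityMeasure {X Y : Type*} [MeasurableSpace X]
    [MeasurableSpace Y] {μ : Measure X} {ν : Measure Y} {φ : X → Y} (hφ : MeasurePreserving φ μ ν)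
    [IsProbabilityMeasure ν] : IsProbabilityMeasure μ :=
  have : IsProbabilityMeasure (μ.map φ) := hφ.map_eq ▸ ‹_›
  Measure.isProbabilityMeasure_of_map φ

theorem abs_integral_sub_integral_le_of_coupling {X : Type*} [MeasurableSpace X]
    {μ ν : Measure X} {ξ : Measure (X × X)}
    (h₁ : MeasurePreserving Prod.fst ξ μ) (h₂ : MeasurePreserving Prod.snd ξ ν)
    {F : X → ℝ} (hFμ : Integrable F μ) (hFν : Integrable F ν)
    {G : X × X → ℝ} (hG : Integrable G ξ) (hFG : ∀ p, |F p.1 - F p.2| ≤ G p) :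
    |∫ x, F x ∂μ - ∫ x, F x ∂ν| ≤ ∫ p, G p ∂ξ := by
  have hF₁ : Integrable (fun p => F p.1) ξ := h₁.integrable_comp_of_integrable hFμ
  have hF₂ : Integrable (fun p => F p.2) ξ := h₂.integrable_comp_of_integrable hFν
  rw [← h₁.integral_comp_of_aestronglyMeasurable hFμ.1,
    ← h₂.integral_comp_of_aestronglyMeasurable hFν.1, ← integral_sub hF₁ hF₂]
  exact abs_integral_le_integral_abs.trans (integral_mono_of_nonneg
    (ae_of_all _ fun _ => abs_nonneg _) hG (ae_of_all _ hFG))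

section LineAverage

variable {E V : Type*} {f : E → V → ℝ} {Lf Bf : ℝ}

theorem nonneg_of_abs_sub_le_mul_norm_add [NormedAddCommGroup E] [NormedAddCommGroup V]
    [Nontrivial E] (hLip : ∀ x v y w, |f x v - f y w| ≤ Lf * (‖x - y‖ + ‖v - w‖)) : 0 ≤ Lf := by
  obtain ⟨x, hx⟩ := exists_ne (0 : E)
  have h := (abs_nonneg _).trans (hLip x 0 0 0)
  simp only [sub_zero, norm_zero, add_zero] at h
  exact nonneg_of_mul_nonneg_left h (norm_pos_iff.2 hx)

theorem continuous_uncurry_of_abs_sub_le [NormedAddCommGroup E] [NormedAddCommGroup V]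
    (hLip : ∀ x v y w, |f x v - f y w| ≤ Lf * (‖x - y‖ + ‖v - w‖)) :
    Continuous (Function.uncurry f) := by
  refine continuous_iff_continuousAt.2 fun p => tendsto_iff_norm_sub_tendsto_zero.2 ?_
  have hbound : Filter.Tendsto (fun q : E × V => Lf * (‖q.1 - p.1‖ + ‖q.2 - p.2‖))
      (nhds p) (nhds 0) := by
    simpa using ((by fun_prop : Continuous fun q : E × V =>
      Lf * (‖q.1 - p.1‖ + ‖q.2 - p.2‖)).tendsto p)
  exact squeeze_zero (fun _ => norm_nonneg _) (fun q => hLip _ _ _ _) hbound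

variable [NormedAddCommGroup E] [NormedSpace ℝ E]

noncomputable def lineAvg (f : E → V → ℝ) (x y : E) (v : V) : ℝ :=
  ∫ t in (0 : ℝ)..1, f (x + t • (y - x)) v

theorem continuous_lineAvg [TopologicalSpace V] {X : Type*} [TopologicalSpace X]
    (hf : Continuous (Function.uncurry f)) {x y : X → E} {v : X → V} (hx : Continuous x)
    (hy : Continuous y) (hv : Continuous v) :
    Continuous fun a => lineAvg f (x a) (y a) (v a) :=
  intervalIntegral.continuous_parametric_intervalIntegral_of_continuous'
    (f := fun a t => f (x a + t • (y a - x a)) (v a))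
    (hf.comp (by fun_prop : Continuous fun p : X × ℝ =>
      (x p.1 + p.2 • (y p.1 - x p.1), v p.1))) 0 1

theorem abs_lineAvg_le (hBdd : ∀ x v, |f x v| ≤ Bf) (x y : E) (v : V) :
    |lineAvg f x y v| ≤ Bf := by
  simpa [lineAvg] using intervalIntegral.norm_integral_le_of_norm_le_const
    (a := 0) (b := 1) (f := fun t => f (x + t • (y - x)) v) fun t _ => hBdd _ _

theorem norm_add_smul_sub_sub_add_smul_sub_le {t : ℝ} (ht₀ : 0 ≤ t) (ht₁ : t ≤ 1)
    (x y x' y' : E) :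
    ‖(x + t • (y - x)) - (x' + t • (y' - x'))‖ ≤ ‖x - x'‖ + ‖y - y'‖ :=
  calc ‖(x + t • (y - x)) - (x' + t • (y' - x'))‖ = ‖(1 - t) • (x - x') + t • (y - y')‖ := by
        congr 1; module
    _ ≤ (1 - t) * ‖x - x'‖ + t * ‖y - y'‖ := by
        refine (norm_add_le _ _).trans_eq ?_
        rw [norm_smul, norm_smul, Real.norm_of_nonneg (by linarith), Real.norm_of_nonneg ht₀]
    _ ≤ ‖x - x'‖ + ‖y - y'‖ := by nlinarith [norm_nonneg (x - x'), norm_nonneg (y - y')]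

theorem abs_lineAvg_sub_le [NormedAddCommGroup V] (hLf : 0 ≤ Lf)
    (hLip : ∀ x v y w, |f x v - f y w| ≤ Lf * (‖x - y‖ + ‖v - w‖)) (x y x' y' : E) (v v' : V) :
    |lineAvg f x y v - lineAvg f x' y' v'| ≤ Lf * (‖x - x'‖ + ‖y - y'‖ + ‖v - v'‖) := by
  have hcont := continuous_uncurry_of_abs_sub_le hLip
  have hint : ∀ (x y : E) (v : V), IntervalIntegrable (fun t : ℝ => f (x + t • (y - x)) v)
      volume 0 1 := fun x y v =>
    (hcont.comp (by fun_prop : Continuous fun t : ℝ => (x + t • (y - x), v))).intervalIntegrable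
      0 1
  have hpt : ∀ t ∈ Set.uIoc (0 : ℝ) 1, ‖f (x + t • (y - x)) v - f (x' + t • (y' - x')) v'‖ ≤
      Lf * (‖x - x'‖ + ‖y - y'‖ + ‖v - v'‖) := fun t ht => by
    rw [Set.uIoc_of_le zero_le_one] at ht
    refine (hLip _ _ _ _).trans (mul_le_mul_of_nonneg_left ?_ hLf)
    linarith [norm_add_smul_sub_sub_add_smul_sub_le ht.1.le ht.2 x y x' y']
  rw [lineAvg, lineAvg, ← intervalIntegral.integral_sub (hint x y v) (hint x' y' v')]
  simpa using intervalIntegral.norm_integral_le_of_norm_le_const hpt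

end LineAverage

/-- A state `((x, v), (x', v'))` of the extended skeleton chain. -/
abbrev SkeletonState (d : ℕ) : Type :=
  (EuclideanSpace ℝ (Fin d) × EuclideanSpace ℝ (Fin d)) ×
    (EuclideanSpace ℝ (Fin d) × EuclideanSpace ℝ (Fin d))

section SkeletonChain

variable {d : ℕ}

noncomputable def groundDist (u₁ u₂ : SkeletonState d) : ℝ :=
  ‖u₁.1.1 - u₂.1.1‖ + ‖u₁.1.2 - u₂.1.2‖ + ‖u₁.2.1 - u₂.2.1‖ + ‖u₁.2.2 - u₂.2.2‖

/-- The function `g` of the paper, so that `H = ζ(g)`. -/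
noncomputable def jumpNorm (u : SkeletonState d) : ℝ := ‖u.1.1 - u.2.1‖ / √d

theorem continuous_jumpNorm : Continuous (jumpNorm (d := d)) := by
  unfold jumpNorm
  fun_prop

theorem Jop_eq_jumpNorm_mul_lineAvg (f : EuclideanSpace ℝ (Fin d) → EuclideanSpace ℝ (Fin d) → ℝ)
    (u : SkeletonState d) :
    Jop f u = jumpNorm u * lineAvg f u.1.1 u.2.1 u.1.2 := by
  rw [Jop, jumpNorm, norm_sub_rev]
  rfl

theorem abs_jumpNorm_sub_le (u₁ u₂ : SkeletonState d) :
    |jumpNorm u₁ - jumpNorm u₂| ≤ groundDist u₁ u₂ / √d := by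
  rw [jumpNorm, jumpNorm, ← sub_div, abs_div, abs_of_nonneg (Real.sqrt_nonneg _)]
  gcongr
  have h := dist_dist_dist_le u₁.1.1 u₁.2.1 u₂.1.1 u₂.2.1
  simp only [dist_eq_norm, Real.norm_eq_abs] at h
  unfold groundDist
  linarith [norm_nonneg (u₁.1.2 - u₂.1.2), norm_nonneg (u₁.2.2 - u₂.2.2)]

variable {f : EuclideanSpace ℝ (Fin d) → EuclideanSpace ℝ (Fin d) → ℝ} {Lf Bf : ℝ}

theorem abs_Jop_le (hBdd : ∀ x v, |f x v| ≤ Bf) (u : SkeletonState d) :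
    |Jop f u| ≤ jumpNorm u * Bf := by
  rw [Jop_eq_jumpNorm_mul_lineAvg, abs_mul, abs_of_nonneg (by unfold jumpNorm; positivity)]
  exact mul_le_mul_of_nonneg_left (abs_lineAvg_le hBdd _ _ _) (by unfold jumpNorm; positivity)

theorem abs_Jop_sub_le (hLf : 0 ≤ Lf)
    (hLip : ∀ x v y w, |f x v - f y w| ≤ Lf * (‖x - y‖ + ‖v - w‖)) (hBdd : ∀ x v, |f x v| ≤ Bf)
    (u₁ u₂ : SkeletonState d) :
    |Jop f u₁ - Jop f u₂| ≤ (Lf * jumpNorm u₁ + Bf / √d) * groundDist u₁ u₂ := by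
  rw [Jop_eq_jumpNorm_mul_lineAvg, Jop_eq_jumpNorm_mul_lineAvg]
  set I₁ := lineAvg f u₁.1.1 u₁.2.1 u₁.1.2
  set I₂ := lineAvg f u₂.1.1 u₂.2.1 u₂.1.2
  have hj₁ : 0 ≤ jumpNorm u₁ := by unfold jumpNorm; positivity
  have hI : |I₁ - I₂| ≤ Lf * groundDist u₁ u₂ := by
    refine (abs_lineAvg_sub_le hLf hLip _ _ _ _ _ _).trans (mul_le_mul_of_nonneg_left ?_ hLf)
    unfold groundDist
    linarith [norm_nonneg (u₁.2.2 - u₂.2.2)]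
  calc |jumpNorm u₁ * I₁ - jumpNorm u₂ * I₂|
        = |jumpNorm u₁ * (I₁ - I₂) + (jumpNorm u₁ - jumpNorm u₂) * I₂| := by ring_nf
    _ ≤ jumpNorm u₁ * (Lf * groundDist u₁ u₂) + groundDist u₁ u₂ / √d * Bf := by
        refine (abs_add_le _ _).trans ?_
        rw [abs_mul, abs_mul, abs_of_nonneg hj₁]
        exact add_le_add (mul_le_mul_of_nonneg_left hI hj₁)
          (mul_le_mul (abs_jumpNorm_sub_le u₁ u₂) (abs_lineAvg_le hBdd _ _ _) (abs_nonneg _)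
            (by unfold groundDist; positivity))
    _ = (Lf * jumpNorm u₁ + Bf / √d) * groundDist u₁ u₂ := by ring

theorem continuous_Jop (hLip : ∀ x v y w, |f x v - f y w| ≤ Lf * (‖x - y‖ + ‖v - w‖)) :
    Continuous (Jop f) := by
  rw [funext (Jop_eq_jumpNorm_mul_lineAvg f)]
  refine continuous_jumpNorm.mul ?_
  exact continuous_lineAvg (continuous_uncurry_of_abs_sub_le hLip) (by fun_prop) (by fun_prop)
    (by fun_prop)

theorem memLp_id_of_integrable_sq_norm_add {μ : Measure (SkeletonState d)}
    (h : Integrable (fun u : SkeletonState d =>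
      ‖u.1.1‖ ^ 2 + ‖u.1.2‖ ^ 2 + ‖u.2.1‖ ^ 2 + ‖u.2.2‖ ^ 2) μ) :
    MemLp id 2 μ := by
  refine (memLp_two_iff_integrable_sq_norm aestronglyMeasurable_id).2 <|
    h.mono' (continuous_id.norm.pow 2).aestronglyMeasurable (ae_of_all _ fun u => ?_)
  set S := ‖u.1.1‖ ^ 2 + ‖u.1.2‖ ^ 2 + ‖u.2.1‖ ^ 2 + ‖u.2.2‖ ^ 2 with hS_def
  have := sq_nonneg ‖u.1.1‖
  have := sq_nonneg ‖u.1.2‖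
  have := sq_nonneg ‖u.2.1‖
  have := sq_nonneg ‖u.2.2‖
  have hS : ∀ a : ℝ, a ^ 2 ≤ S → a ≤ √S := fun a ha =>
    (le_abs_self a).trans (Real.abs_le_sqrt ha)
  have hu : ‖u‖ ≤ √S := norm_prod_le_iff.2
    ⟨norm_prod_le_iff.2 ⟨hS _ (by linarith), hS _ (by linarith)⟩,
      norm_prod_le_iff.2 ⟨hS _ (by linarith), hS _ (by linarith)⟩⟩
  simp only [id, norm_pow, norm_norm]
  calc ‖u‖ ^ 2 ≤ √S ^ 2 := pow_le_pow_left₀ (norm_nonneg _) hu 2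
    _ = S := Real.sq_sqrt (by positivity)

theorem memLp_jumpNorm {μ : Measure (SkeletonState d)} (h : MemLp id 2 μ) :
    MemLp jumpNorm 2 μ := by
  convert (h.fst.fst.sub h.snd.fst).norm.mul_const (√d)⁻¹ using 1
  exact funext fun u => div_eq_mul_inv _ _

theorem integrable_Jop {μ : Measure (SkeletonState d)} [IsFiniteMeasure μ]
    (hLip : ∀ x v y w, |f x v - f y w| ≤ Lf * (‖x - y‖ + ‖v - w‖)) (hBdd : ∀ x v, |f x v| ≤ Bf)
    (h : MemLp id 2 μ) : Integrable (Jop f) μ :=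
  ((memLp_jumpNorm h).integrable one_le_two |>.mul_const Bf).mono'
    (continuous_Jop hLip).aestronglyMeasurable (ae_of_all _ fun u => abs_Jop_le hBdd u)

variable {μ ν : Measure (SkeletonState d)} {ξ : Measure (SkeletonState d × SkeletonState d)}

theorem memLp_groundDist (h₁ : MeasurePreserving Prod.fst ξ μ)
    (h₂ : MeasurePreserving Prod.snd ξ ν) (hμ : MemLp id 2 μ) (hν : MemLp id 2 ν) :
    MemLp (fun p => groundDist p.1 p.2) 2 ξ := by
  refine ((hμ.comp_measurePreserving h₁).sub (hν.comp_measurePreserving h₂)).of_le_mul (c := 4)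
    (by unfold groundDist; fun_prop) (ae_of_all _ fun p => ?_)
  have hcomp : ∀ q : SkeletonState d,
      ‖q.1.1‖ ≤ ‖q‖ ∧ ‖q.1.2‖ ≤ ‖q‖ ∧ ‖q.2.1‖ ≤ ‖q‖ ∧ ‖q.2.2‖ ≤ ‖q‖ := fun q =>
    ⟨(norm_fst_le _).trans (norm_fst_le q), (norm_snd_le _).trans (norm_fst_le q),
      (norm_fst_le _).trans (norm_snd_le q), (norm_snd_le _).trans (norm_snd_le q)⟩
  obtain ⟨h₁₁, h₁₂, h₂₁, h₂₂⟩ := hcomp (p.1 - p.2)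
  rw [Real.norm_of_nonneg (by unfold groundDist; positivity)]
  unfold groundDist
  simp only [Function.comp, id, Pi.sub_apply, Prod.fst_sub, Prod.snd_sub] at h₁₁ h₁₂ h₂₁ h₂₂ ⊢
  linarith

theorem abs_integral_jumpNorm_sub_le [IsProbabilityMeasure μ] [IsProbabilityMeasure ν]
    (h₁ : MeasurePreserving Prod.fst ξ μ) (h₂ : MeasurePreserving Prod.snd ξ ν)
    (hμ : MemLp id 2 μ) (hν : MemLp id 2 ν) :
    |∫ u, jumpNorm u ∂μ - ∫ u, jumpNorm u ∂ν| ≤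
      √(∫ p, groundDist p.1 p.2 ^ 2 ∂ξ) * (√d)⁻¹ := by
  have := h₁.isProbabilityMeasure
  have hG := memLp_groundDist h₁ h₂ hμ hν
  calc |∫ u, jumpNorm u ∂μ - ∫ u, jumpNorm u ∂ν|
      ≤ ∫ p, groundDist p.1 p.2 / √d ∂ξ :=
        abs_integral_sub_integral_le_of_coupling h₁ h₂
          ((memLp_jumpNorm hμ).integrable one_le_two) ((memLp_jumpNorm hν).integrable one_le_two)
          ((hG.integrable one_le_two).div_const _) fun p => abs_jumpNorm_sub_le p.1 p.2
    _ = (∫ p, groundDist p.1 p.2 ∂ξ) * (√d)⁻¹ := by rw [integral_div, div_eq_mul_inv]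
    _ ≤ √(∫ p, groundDist p.1 p.2 ^ 2 ∂ξ) * (√d)⁻¹ := by
        gcongr
        exact integral_le_sqrt_integral_sq hG

theorem abs_integral_Jop_sub_le [IsProbabilityMeasure μ] [IsProbabilityMeasure ν] (hLf : 0 ≤ Lf)
    (hLip : ∀ x v y w, |f x v - f y w| ≤ Lf * (‖x - y‖ + ‖v - w‖)) (hBdd : ∀ x v, |f x v| ≤ Bf)
    (h₁ : MeasurePreserving Prod.fst ξ μ) (h₂ : MeasurePreserving Prod.snd ξ ν)
    (hμ : MemLp id 2 μ) (hν : MemLp id 2 ν) :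
    |∫ u, Jop f u ∂μ - ∫ u, Jop f u ∂ν| ≤
      √(∫ p, groundDist p.1 p.2 ^ 2 ∂ξ) *
        ((Lf * √(∫ u, ‖u.2.1 - u.1.1‖ ^ 2 ∂μ) + Bf) / √d) := by
  have := h₁.isProbabilityMeasure
  have hG := memLp_groundDist h₁ h₂ hμ hν
  have hJ : MemLp (fun p => jumpNorm p.1) 2 ξ := (memLp_jumpNorm hμ).comp_measurePreserving h₁
  have hJG : Integrable (fun p => jumpNorm p.1 * groundDist p.1 p.2) ξ := hJ.integrable_mul hG
  have hGi : Integrable (fun p => groundDist p.1 p.2) ξ := hG.integrable one_le_two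
  have hweight : Integrable (fun p => (Lf * jumpNorm p.1 + Bf / √d) * groundDist p.1 p.2) ξ := by
    refine ((hJG.const_mul Lf).add (hGi.const_mul (Bf / √d))).congr (ae_of_all _ fun p => ?_)
    simp only [Pi.add_apply]
    ring
  have hjump_sq : ∫ p, jumpNorm p.1 ^ 2 ∂ξ = (∫ u, ‖u.2.1 - u.1.1‖ ^ 2 ∂μ) / d := by
    rw [h₁.integral_comp_of_aestronglyMeasurable (F := fun u => jumpNorm u ^ 2)
      (continuous_jumpNorm.pow 2).aestronglyMeasurable, ← integral_div]
    congr 1 with u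
    rw [jumpNorm, div_pow, Real.sq_sqrt (Nat.cast_nonneg d), norm_sub_rev]
  calc |∫ u, Jop f u ∂μ - ∫ u, Jop f u ∂ν|
      ≤ ∫ p, (Lf * jumpNorm p.1 + Bf / √d) * groundDist p.1 p.2 ∂ξ :=
        abs_integral_sub_integral_le_of_coupling h₁ h₂ (integrable_Jop hLip hBdd hμ)
          (integrable_Jop hLip hBdd hν) hweight fun p => abs_Jop_sub_le hLf hLip hBdd p.1 p.2
    _ = Lf * ∫ p, jumpNorm p.1 * groundDist p.1 p.2 ∂ξ +
          Bf / √d * ∫ p, groundDist p.1 p.2 ∂ξ := by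
        simp only [add_mul, mul_assoc]
        rw [integral_add (hJG.const_mul Lf) (hGi.const_mul _), integral_const_mul,
          integral_const_mul]
    _ ≤ Lf * (√(∫ p, jumpNorm p.1 ^ 2 ∂ξ) * √(∫ p, groundDist p.1 p.2 ^ 2 ∂ξ)) +
        Bf / √d * √(∫ p, groundDist p.1 p.2 ^ 2 ∂ξ) := by
        have hBf : 0 ≤ Bf := (abs_nonneg _).trans (hBdd 0 0)
        gcongr
        · exact integral_mul_le_sqrt_integral_sq_mul hJ hG
        · exact integral_le_sqrt_integral_sq hG
    _ = √(∫ p, groundDist p.1 p.2 ^ 2 ∂ξ) *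
        ((Lf * √(∫ u, ‖u.2.1 - u.1.1‖ ^ 2 ∂μ) + Bf) / √d) := by
        rw [hjump_sq, Real.sqrt_div' _ (Nat.cast_nonneg d)]
        ring

theorem le_W2S_mul [IsProbabilityMeasure μ] [IsProbabilityMeasure ν] {D C : ℝ} (hC : 0 ≤ C)
    (h : ∀ ξ : Measure (SkeletonState d × SkeletonState d), MeasurePreserving Prod.fst ξ μ →
      MeasurePreserving Prod.snd ξ ν → D ≤ √(∫ p, groundDist p.1 p.2 ^ 2 ∂ξ) * C) :
    D ≤ W2S μ ν * C := by
  unfold W2S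
  refine le_sqrt_csInf_mul ?_ ⟨0, ?_⟩ hC ?_
  · exact ⟨_, μ.prod ν, by simp, by simp, rfl⟩
  · rintro _ ⟨ξ, -, -, rfl⟩
    exact integral_nonneg fun _ => sq_nonneg _
  · rintro _ ⟨ξ, h₁, h₂, rfl⟩
    exact h ξ ⟨measurable_fst, h₁⟩ ⟨measurable_snd, h₂⟩

end SkeletonChain

/-- **Theorem 2 (quantitative form): bound on the discrepancy of ergodic averages.**
With `μ(f) = H⁻¹ ζ(𝒥f)`, `μ̃(f) = H̃⁻¹ ζ̃(𝒥f)`, where `H = ζ(g) > 0`, `H̃ = ζ̃(g) > 0`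
and `g(x,v,x',v') = ‖x−x'‖₂/√d`, for every bounded Lipschitz `f`,
`|μ̃(f) − μ(f)| ≤ (d_W(ζ, ζ̃)/(√d H̃)) (|f|_Lip E_ζ[‖x'−x‖²]^{1/2} + ‖f‖_∞ + |μ(f)|)`. -/
theorem ergodic_average_discrepancy_bound {d : ℕ} (hd : 0 < d)
    (ζ ζt : Measure ((EuclideanSpace ℝ (Fin d) × EuclideanSpace ℝ (Fin d)) ×
      (EuclideanSpace ℝ (Fin d) × EuclideanSpace ℝ (Fin d))))
    [IsProbabilityMeasure ζ] [IsProbabilityMeasure ζt]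
    (hζ2 : Integrable (fun u => ‖u.1.1‖ ^ 2 + ‖u.1.2‖ ^ 2 + ‖u.2.1‖ ^ 2 + ‖u.2.2‖ ^ 2) ζ)
    (hζt2 : Integrable (fun u => ‖u.1.1‖ ^ 2 + ‖u.1.2‖ ^ 2 + ‖u.2.1‖ ^ 2 + ‖u.2.2‖ ^ 2) ζt)
    (g : (EuclideanSpace ℝ (Fin d) × EuclideanSpace ℝ (Fin d)) ×
         (EuclideanSpace ℝ (Fin d) × EuclideanSpace ℝ (Fin d)) → ℝ)
    (hg : ∀ u, g u = ‖u.1.1 - u.2.1‖ / Real.sqrt d)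
    (H Ht : ℝ) (hH : H = ∫ u, g u ∂ζ) (hHt : Ht = ∫ u, g u ∂ζt)
    (hHpos : 0 < H) (hHtpos : 0 < Ht)
    (f : EuclideanSpace ℝ (Fin d) → EuclideanSpace ℝ (Fin d) → ℝ)
    (Lf Bf : ℝ)
    (hLip : ∀ x v y w, |f x v - f y w| ≤ Lf * (‖x - y‖ + ‖v - w‖))
    (hBdd : ∀ x v, |f x v| ≤ Bf) :
    |Ht⁻¹ * (∫ u, Jop f u ∂ζt) - H⁻¹ * ∫ u, Jop f u ∂ζ| ≤
      W2S ζ ζt / (Real.sqrt d * Ht) *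
        (Lf * Real.sqrt (∫ u, ‖u.2.1 - u.1.1‖ ^ 2 ∂ζ) + Bf +
          |H⁻¹ * ∫ u, Jop f u ∂ζ|) := by
  have hLf : 0 ≤ Lf :=
    have : Nonempty (Fin d) := ⟨⟨0, hd⟩⟩
    nonneg_of_abs_sub_le_mul_norm_add hLip
  have hBf : 0 ≤ Bf := (abs_nonneg _).trans (hBdd 0 0)
  obtain rfl : g = jumpNorm := funext hg
  have hζ := memLp_id_of_integrable_sq_norm_add hζ2
  have hζt := memLp_id_of_integrable_sq_norm_add hζt2
  have hHdiff : |H - Ht| ≤ W2S ζ ζt * (√d)⁻¹ := by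
    subst hH hHt
    exact le_W2S_mul (by positivity) fun ξ h₁ h₂ => abs_integral_jumpNorm_sub_le h₁ h₂ hζ hζt
  have hJdiff : |∫ u, Jop f u ∂ζt - ∫ u, Jop f u ∂ζ| ≤
      W2S ζ ζt * ((Lf * √(∫ u, ‖u.2.1 - u.1.1‖ ^ 2 ∂ζ) + Bf) / √d) := by
    rw [abs_sub_comm]
    exact le_W2S_mul (by positivity) fun ξ h₁ h₂ =>
      abs_integral_Jop_sub_le hLf hLip hBdd h₁ h₂ hζ hζt
  calc _ ≤ Ht⁻¹ * (|∫ u, Jop f u ∂ζt - ∫ u, Jop f u ∂ζ| +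
          |H - Ht| * |H⁻¹ * ∫ u, Jop f u ∂ζ|) :=
        abs_inv_mul_sub_inv_mul_le hHpos.ne' hHtpos
    _ ≤ Ht⁻¹ * (W2S ζ ζt * ((Lf * √(∫ u, ‖u.2.1 - u.1.1‖ ^ 2 ∂ζ) + Bf) / √d) +
          W2S ζ ζt * (√d)⁻¹ * |H⁻¹ * ∫ u, Jop f u ∂ζ|) := by gcongr
    _ = _ := by
        simp only [div_eq_mul_inv, mul_inv]
        ring
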